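/- arXiv:2011.09211 — 6 statements merged into one kernel-verified Lean document; each statement's English description precedes it below -/
import Mathlib

section
/- The function g(x;θ) = (θ²/(θ+1))·(x+θ+2)/(x+θ)³ for x > 0 is a probability density function, i.e., it is nonnegative and integrates to 1 over (0,∞), for every θ > 0. -/
open MeasureTheory Set Filter

theorem cel_is_pdf (θ : ℝ) (hθ : 0 < θ) :
    (∀ x : ℝ, 0 < x → 0 ≤ θ ^ 2 / (θ + 1) * (x + θ + 2) / (x + θ) ^ 3) ∧
    ∫ x in Ioi (0 : ℝ), θ ^ 2 / (θ + 1) * (x + θ + 2) / (x + θ) ^ 3 = 1 := by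
  have hθ1 : (0:ℝ) < θ + 1 := by linarith
  set c : ℝ := θ ^ 2 / (θ + 1) with hc
  have hcpos : 0 < c := by positivity
  constructor
  · intro x hx
    have h1 : 0 < x + θ := by linarith
    positivity
  · set F : ℝ → ℝ := fun x => -c * ((x + θ)⁻¹ + ((x + θ) ^ 2)⁻¹) with hF
    have hderiv : ∀ x ∈ Ioi (0:ℝ), HasDerivAt F (c * (x + θ + 2) / (x + θ) ^ 3) x := by
      intro x hx
      have hx0 : 0 < x := hx
      have hxθ : (0:ℝ) < x + θ := by linarith
      have hne : x + θ ≠ 0 := ne_of_gt hxθ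
      have h1 : HasDerivAt (fun y : ℝ => y + θ) 1 x := (hasDerivAt_id x).add_const θ
      have h2 : HasDerivAt (fun y : ℝ => (y + θ)⁻¹) (-1 / (x + θ) ^ 2) x := by
        have := h1.inv hne
        exact this.congr_deriv (by norm_num)
      have h3 : HasDerivAt (fun y : ℝ => ((y + θ) ^ 2)⁻¹) (-(2 * (x + θ)) / ((x + θ) ^ 2) ^ 2) x := by
        have hp : HasDerivAt (fun y : ℝ => (y + θ) ^ 2) (2 * (x + θ)) x := by
          have := h1.pow 2
          exact this.congr_deriv (by norm_num)
        have := hp.inv (by positivity)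
        exact this.congr_deriv (by norm_num)
      have h4 := ((h2.add h3).const_mul (-c))
      refine h4.congr_deriv ?_
      field_simp
      ring
    have hcont : ContinuousWithinAt F (Ici (0:ℝ)) 0 := by
      apply ContinuousAt.continuousWithinAt
      have hne : (0:ℝ) + θ ≠ 0 := by simpa using hθ.ne'
      fun_prop (disch := intros; positivity)
    have hnonneg : ∀ x ∈ Ioi (0:ℝ), 0 ≤ c * (x + θ + 2) / (x + θ) ^ 3 := by
      intro x hx
      have hx0 : 0 < x := hx
      have h1 : 0 < x + θ := by linarith
      positivity
    have htends : Tendsto F atTop (nhds 0) := by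
      have t1 : Tendsto (fun x : ℝ => (x + θ)⁻¹) atTop (nhds 0) := by
        apply Tendsto.inv_tendsto_atTop
        exact tendsto_atTop_add_const_right _ θ tendsto_id
      have t2 : Tendsto (fun x : ℝ => ((x + θ) ^ 2)⁻¹) atTop (nhds 0) := by
        have := t1.pow 2
        simpa [inv_pow] using this
      have := ((t1.add t2).const_mul (-c))
      simpa [hF, neg_mul] using this
    have key := integral_Ioi_of_hasDerivAt_of_nonneg hcont hderiv hnonneg htends
    rw [key]
    simp only [hF, hc]
    field_simp
    ring
end

section
/- For the CEL(θ) distribution, the cumulative distribution function is G(x;θ) = x[x(θ+1)+θ(θ+2)] / [(θ+1)(x+θ)²] for x ≥ 0, i.e., ∫₀^x (θ²/(θ+1))·(t+θ+2)/(t+θ)³ dt equals this expression. -/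
theorem cel_cdf (θ : ℝ) (hθ : 0 < θ) (x : ℝ) (hx : 0 ≤ x) :
    ∫ t in (0 : ℝ)..x, θ ^ 2 / (θ + 1) * (t + θ + 2) / (t + θ) ^ 3
      = x * (x * (θ + 1) + θ * (θ + 2)) / ((θ + 1) * (x + θ) ^ 2) := by
  have key : ∀ t ∈ Set.uIcc (0 : ℝ) x, 0 < t + θ := by
    intro t ht
    rw [Set.uIcc_of_le hx] at ht
    linarith [ht.1]
  have hF : ∀ t ∈ Set.uIcc (0 : ℝ) x,
      HasDerivAt (fun s => θ ^ 2 / (θ + 1) * (-(s + θ)⁻¹ - ((s + θ) ^ 2)⁻¹))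
        (θ ^ 2 / (θ + 1) * (t + θ + 2) / (t + θ) ^ 3) t := by
    intro t ht
    have hne : t + θ ≠ 0 := (key t ht).ne'
    have h1 : HasDerivAt (fun s : ℝ => s + θ) 1 t :=
      (hasDerivAt_id t).add_const θ
    have h2 : HasDerivAt (fun s : ℝ => (s + θ)⁻¹) (-((t + θ) ^ 2)⁻¹) t := by
      simpa [neg_div, one_div, Pi.inv_def] using h1.inv hne
    have h3 : HasDerivAt (fun s : ℝ => ((s + θ) ^ 2)⁻¹)
        (-(2 * (t + θ)) / ((t + θ) ^ 2) ^ 2) t := by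
      have := (h1.pow 2).inv (pow_ne_zero 2 hne)
      simpa [mul_comm, Pi.inv_def, Pi.pow_def] using this
    have : HasDerivAt (fun s => θ ^ 2 / (θ + 1) * (-(s + θ)⁻¹ - ((s + θ) ^ 2)⁻¹))
        (θ ^ 2 / (θ + 1) * (- -((t + θ) ^ 2)⁻¹ - -(2 * (t + θ)) / ((t + θ) ^ 2) ^ 2)) t :=
      ((h2.neg.sub (by simpa [zpow_two] using h3)).const_mul (θ ^ 2 / (θ + 1)))
    convert this using 1
    have hne2 : (t + θ) ^ 2 ≠ 0 := pow_ne_zero 2 hne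
    field_simp
    ring
  have hcont : IntervalIntegrable
      (fun t => θ ^ 2 / (θ + 1) * (t + θ + 2) / (t + θ) ^ 3)
      MeasureTheory.volume 0 x := by
    apply ContinuousOn.intervalIntegrable
    apply ContinuousOn.div
    · exact (continuous_const.mul (by continuity)).continuousOn
    · exact (by continuity : Continuous fun t : ℝ => (t + θ) ^ 3).continuousOn
    · intro t ht
      exact pow_ne_zero 3 (key t ht).ne'
  rw [intervalIntegral.integral_eq_sub_of_hasDerivAt hF hcont]
  have h0 : (0 : ℝ) + θ ≠ 0 := by simpa using hθ.ne'
  have hxθ : x + θ ≠ 0 := by positivity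
  have hθ1 : θ + 1 ≠ 0 := by positivity
  field_simp
  ring
end

section
/- For every θ > 0 and every real r with 0 < r < 1, the r-th moment of CEL(θ) is finite and equals (θ^{r+1}/(θ+1))·[B(r+1, 1−r) + (2/θ)·B(r+1, 2−r)], where B denotes the Beta function. -/
open MeasureTheory Set

noncomputable def BetaInt (m n : ℝ) : ℝ := ∫ z in Ioi (0 : ℝ), z ^ (m - 1) / (1 + z) ^ (m + n)

lemma aux_integrable (r : ℝ) (hr0 : 0 < r) (hr1 : r < 1) (n : ℕ) (hn : 2 ≤ n) :
    IntegrableOn (fun z : ℝ => z ^ r / (1 + z) ^ n) (Ioi 0) := by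
  have hmeas : AEStronglyMeasurable (fun z : ℝ => z ^ r / (1 + z) ^ n)
      (volume.restrict (Ioi (0:ℝ))) := by
    exact ((measurable_id.pow_const r).div
      ((measurable_const.add measurable_id).pow_const n)).aestronglyMeasurable
  have h1 : IntegrableOn (fun z : ℝ => z ^ r / (1 + z) ^ n) (Ioo 0 1) := by
    have hint : IntegrableOn (fun z : ℝ => z ^ r) (Ioo (0:ℝ) 1) :=
      (intervalIntegral.integrableOn_Ioo_rpow_iff zero_lt_one).mpr (by linarith)
    refine hint.mono' (hmeas.mono_set Ioo_subset_Ioi_self) ?_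
    filter_upwards [ae_restrict_mem measurableSet_Ioo] with z hz
    have hz0 : (0:ℝ) < z := hz.1
    have h1z : (1:ℝ) ≤ (1 + z) ^ n := one_le_pow₀ (by linarith)
    have hnn : 0 ≤ z ^ r / (1 + z) ^ n :=
      div_nonneg (Real.rpow_nonneg hz0.le r) (by linarith)
    rw [Real.norm_eq_abs, abs_of_nonneg hnn]
    exact div_le_self (Real.rpow_nonneg hz0.le r) h1z
  have h2 : IntegrableOn (fun z : ℝ => z ^ r / (1 + z) ^ n) (Ici 1) := by
    rw [integrableOn_Ici_iff_integrableOn_Ioi]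
    have hint : IntegrableOn (fun z : ℝ => z ^ (r - n)) (Ioi (1:ℝ)) :=
      (integrableOn_Ioi_rpow_iff zero_lt_one).mpr (by
        have : (2:ℝ) ≤ n := by exact_mod_cast hn
        linarith)
    refine hint.mono' (hmeas.mono_set (Ioi_subset_Ioi zero_le_one)) ?_
    filter_upwards [ae_restrict_mem measurableSet_Ioi] with z hz
    have hz1 : (1:ℝ) < z := hz
    have hz0 : (0:ℝ) < z := by linarith
    have hnn : 0 ≤ z ^ r / (1 + z) ^ n :=
      div_nonneg (Real.rpow_nonneg hz0.le r) (pow_nonneg (by linarith) n)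
    rw [Real.norm_eq_abs, abs_of_nonneg hnn]
    have hpow : z ^ (r - (n:ℝ)) = z ^ r / z ^ n := by
      rw [Real.rpow_sub hz0, Real.rpow_natCast]
    rw [hpow]
    exact div_le_div_of_nonneg_left (Real.rpow_nonneg hz0.le r) (pow_pos hz0 n)
      (pow_le_pow_left₀ hz0.le (by linarith) n)
  have := h1.union h2
  rwa [Ioo_union_Ici_eq_Ioi zero_lt_one] at this

theorem cel_fractional_moment (θ : ℝ) (hθ : 0 < θ) (r : ℝ) (hr0 : 0 < r) (hr1 : r < 1) :
    IntegrableOn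
        (fun x : ℝ => x ^ r * (θ ^ 2 / (θ + 1) * (x + θ + 2) / (x + θ) ^ 3)) (Ioi 0) ∧
    ∫ x in Ioi (0 : ℝ), x ^ r * (θ ^ 2 / (θ + 1) * (x + θ + 2) / (x + θ) ^ 3)
      = θ ^ (r + 1) / (θ + 1) * (BetaInt (r + 1) (1 - r) + 2 / θ * BetaInt (r + 1) (2 - r)) := by
  have hθ1 : (0:ℝ) < θ + 1 := by linarith
  set c1 : ℝ := θ ^ (r + 1) / (θ + 1) with hc1
  set c2 : ℝ := 2 * θ ^ r / (θ + 1) with hc2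
  set g1 : ℝ → ℝ := fun z => z ^ r / (1 + z) ^ (2:ℕ) with hg1def
  set g2 : ℝ → ℝ := fun z => z ^ r / (1 + z) ^ (3:ℕ) with hg2def
  set F : ℝ → ℝ := fun z => c1 * g1 z + c2 * g2 z with hFdef
  have hg1 : IntegrableOn g1 (Ioi 0) := aux_integrable r hr0 hr1 2 le_rfl
  have hg2 : IntegrableOn g2 (Ioi 0) := aux_integrable r hr0 hr1 3 (by norm_num)
  have hF : IntegrableOn F (Ioi 0) := (hg1.const_mul c1).add (hg2.const_mul c2)
  have key : EqOn (fun x : ℝ => x ^ r * (θ ^ 2 / (θ + 1) * (x + θ + 2) / (x + θ) ^ 3))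
      (fun x : ℝ => θ⁻¹ * F (θ⁻¹ * x)) (Ioi 0) := by
    intro x hx
    have hx0 : (0:ℝ) < x := hx
    have hxθ : (0:ℝ) < x + θ := by linarith
    have hrp : (0:ℝ) < θ ^ r := Real.rpow_pos_of_pos hθ r
    simp only [hFdef, hg1def, hg2def, hc1, hc2]
    have h1 : (θ⁻¹ * x) ^ r = x ^ r / θ ^ r := by
      rw [Real.mul_rpow (inv_nonneg.mpr hθ.le) hx0.le, Real.inv_rpow hθ.le,
        inv_mul_eq_div]
    have h2 : 1 + θ⁻¹ * x = (θ + x) / θ := by field_simp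
    have h3 : θ ^ (r + 1) = θ ^ r * θ := Real.rpow_add_one hθ.ne' r
    rw [h1, h2, h3]
    rw [div_pow, div_pow]
    field_simp
    ring
  have hcomp : IntegrableOn (fun x : ℝ => θ⁻¹ * F (θ⁻¹ * x)) (Ioi 0) := by
    have := (integrableOn_Ioi_comp_mul_left_iff F 0 (inv_pos.mpr hθ)).mpr
      (by simpa using hF)
    exact this.const_mul θ⁻¹
  have hInt : IntegrableOn
      (fun x : ℝ => x ^ r * (θ ^ 2 / (θ + 1) * (x + θ + 2) / (x + θ) ^ 3)) (Ioi 0) :=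
    (integrableOn_congr_fun key measurableSet_Ioi).mpr hcomp
  refine ⟨hInt, ?_⟩
  rw [setIntegral_congr_fun measurableSet_Ioi key]
  rw [MeasureTheory.integral_const_mul]
  rw [integral_comp_mul_left_Ioi F 0 (inv_pos.mpr hθ)]
  simp only [mul_zero, inv_inv, smul_eq_mul]
  rw [← mul_assoc, inv_mul_cancel₀ hθ.ne', one_mul]
  have hsplit : ∫ z in Ioi (0:ℝ), F z
      = c1 * (∫ z in Ioi (0:ℝ), g1 z) + c2 * (∫ z in Ioi (0:ℝ), g2 z) := by
    rw [hFdef]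
    rw [integral_add (hg1.const_mul c1) (hg2.const_mul c2),
      MeasureTheory.integral_const_mul, MeasureTheory.integral_const_mul]
  have hB1 : BetaInt (r + 1) (1 - r) = ∫ z in Ioi (0:ℝ), g1 z := by
    unfold BetaInt
    rw [show r + 1 - 1 = r from by ring, show r + 1 + (1 - r) = (2:ℝ) from by ring]
    simp_rw [hg1def, show (2:ℝ) = ((2:ℕ):ℝ) from by norm_num, Real.rpow_natCast]
  have hB2 : BetaInt (r + 1) (2 - r) = ∫ z in Ioi (0:ℝ), g2 z := by
    unfold BetaInt
    rw [show r + 1 - 1 = r from by ring, show r + 1 + (2 - r) = (3:ℝ) from by ring]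
    simp_rw [hg2def, show (3:ℝ) = ((3:ℕ):ℝ) from by norm_num, Real.rpow_natCast]
  rw [hsplit, hB1, hB2, hc1, hc2]
  have h3 : θ ^ (r + 1) = θ ^ r * θ := Real.rpow_add_one hθ.ne' r
  rw [h3]
  field_simp
end

section
/- For θ > 0 and u ∈ (0,1), the value x = θ·[2/(−θ + √((θ+2)² − 4u(θ+1))) − 1] is positive and satisfies G(x;θ) = u, where G is the CEL(θ) cdf; i.e., this is the quantile function of CEL(θ). -/
theorem cel_quantile (θ : ℝ) (hθ : 0 < θ) (u : ℝ) (hu0 : 0 < u) (hu1 : u < 1) :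
    0 < θ * (2 / (-θ + Real.sqrt ((θ + 2) ^ 2 - 4 * u * (θ + 1))) - 1) ∧
    (let x := θ * (2 / (-θ + Real.sqrt ((θ + 2) ^ 2 - 4 * u * (θ + 1))) - 1);
      x * (x * (θ + 1) + θ * (θ + 2)) / ((θ + 1) * (x + θ) ^ 2) = u) := by
  have hnn : (0:ℝ) ≤ (θ + 2) ^ 2 - 4 * u * (θ + 1) := by nlinarith
  have hs := Real.sq_sqrt hnn
  set s := Real.sqrt ((θ + 2) ^ 2 - 4 * u * (θ + 1)) with hsdef
  have hsnn : 0 ≤ s := Real.sqrt_nonneg _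
  have hsθ : θ < s := by nlinarith
  have hs2 : s < θ + 2 := by nlinarith
  have hd : 0 < -θ + s := by linarith
  have hx : 0 < θ * (2 / (-θ + s) - 1) := by
    have h1 : 1 < 2 / (-θ + s) := (one_lt_div hd).2 (by linarith)
    nlinarith
  refine ⟨hx, ?_⟩
  show θ * (2 / (-θ + s) - 1) * (θ * (2 / (-θ + s) - 1) * (θ + 1) + θ * (θ + 2)) /
      ((θ + 1) * (θ * (2 / (-θ + s) - 1) + θ) ^ 2) = u
  have hne : -θ + s ≠ 0 := ne_of_gt hd
  have hθ1 : (θ:ℝ) + 1 ≠ 0 := by linarith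
  rw [div_eq_iff]
  · field_simp
    linear_combination (-1 : ℝ) * hs
  · positivity
end

section
/- For θ > 0, the median of the CEL(θ) distribution is m = θ·[2/(−θ + √((θ+1)² + 1)) − 1], i.e., G(m;θ) = 1/2. -/
theorem cel_median (θ : ℝ) (hθ : 0 < θ) :
    (let m := θ * (2 / (-θ + Real.sqrt ((θ + 1) ^ 2 + 1)) - 1);
      m * (m * (θ + 1) + θ * (θ + 2)) / ((θ + 1) * (m + θ) ^ 2) = 1 / 2) := by
  intro m
  set s := Real.sqrt ((θ + 1) ^ 2 + 1) with hs
  have hpos : (0:ℝ) < (θ + 1) ^ 2 + 1 := by positivity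
  have hs2 : s ^ 2 = (θ + 1) ^ 2 + 1 := Real.sq_sqrt hpos.le
  have hsgt : θ < s := by
    nlinarith [Real.sqrt_nonneg ((θ + 1) ^ 2 + 1), hs2]
  have hd : -θ + s ≠ 0 := by linarith
  have hm : m = θ * (2 / (-θ + s) - 1) := rfl
  have hmθ : m + θ = 2 * θ / (-θ + s) := by
    rw [hm]; field_simp; ring
  have hmθpos : 0 < m + θ := by
    rw [hmθ]; exact div_pos (by linarith) (by linarith)
  have hθ1 : (0:ℝ) < θ + 1 := by linarith
  rw [div_eq_div_iff (by positivity) (by norm_num)]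
  rw [hm]
  field_simp
  linear_combination (-2) * hs2
end

section
/- For θ > 0, if U is uniformly distributed on (0,1), then the random variable X = θ·[2/(−θ + √((θ+2)² − 4U(θ+1))) − 1] has the CEL(θ) distribution, i.e., P(X ≤ x) = G(x;θ) for all x ≥ 0. -/
open MeasureTheory Set

theorem cel_inverse_transform (θ : ℝ) (hθ : 0 < θ) (x : ℝ) (hx : 0 ≤ x) :
    Measure.map
        (fun u : ℝ => θ * (2 / (-θ + Real.sqrt ((θ + 2) ^ 2 - 4 * u * (θ + 1))) - 1))
        (volume.restrict (Ioo (0 : ℝ) 1)) (Iic x)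
      = ENNReal.ofReal (x * (x * (θ + 1) + θ * (θ + 2)) / ((θ + 1) * (x + θ) ^ 2)) := by
  have hθ1 : (0:ℝ) < θ + 1 := by linarith
  have hxθ : (0:ℝ) < x + θ := by linarith
  obtain ⟨G, hG⟩ : ∃ y : ℝ, y = x * (x * (θ + 1) + θ * (θ + 2)) / ((θ + 1) * (x + θ) ^ 2) :=
    ⟨_, rfl⟩
  rw [← hG]
  have hGnn : 0 ≤ G := by
    rw [hG]
    apply div_nonneg
    · exact mul_nonneg hx (by nlinarith)
    · positivity
  have hG1 : G < 1 := by
    rw [hG, div_lt_one (by positivity)]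
    nlinarith [mul_nonneg (mul_nonneg hθ.le hθ.le) hx, mul_pos (mul_pos hθ hθ) hθ1]
  have hmeas : Measurable (fun u : ℝ =>
      θ * (2 / (-θ + Real.sqrt ((θ + 2) ^ 2 - 4 * u * (θ + 1))) - 1)) := by
    apply Measurable.mul measurable_const
    apply Measurable.sub _ measurable_const
    apply Measurable.div measurable_const
    apply Measurable.add measurable_const
    exact (Real.continuous_sqrt.measurable).comp (by fun_prop)
  rw [Measure.map_apply hmeas measurableSet_Iic,
    Measure.restrict_apply (hmeas measurableSet_Iic)]
  have hset : (fun u : ℝ =>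
      θ * (2 / (-θ + Real.sqrt ((θ + 2) ^ 2 - 4 * u * (θ + 1))) - 1)) ⁻¹' Iic x
      ∩ Ioo 0 1 = Ioc 0 G := by
    ext u
    simp only [mem_inter_iff, mem_preimage, mem_Iic, mem_Ioo, mem_Ioc]
    obtain ⟨D, hDdef⟩ : ∃ y : ℝ, y = (θ + 2) ^ 2 - 4 * u * (θ + 1) := ⟨_, rfl⟩
    obtain ⟨s, hsdef⟩ : ∃ y : ℝ, y = Real.sqrt D := ⟨_, rfl⟩
    rw [← hDdef, ← hsdef]
    constructor
    · rintro ⟨hfx, hu0, hu1⟩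
      refine ⟨hu0, ?_⟩
      have hD1 : θ ^ 2 < D := by rw [hDdef]; nlinarith
      have hDnn : 0 ≤ D := by nlinarith
      have hs2 : s ^ 2 = D := by rw [hsdef]; exact Real.sq_sqrt hDnn
      have hs : θ < s := by rw [hsdef]; exact (Real.lt_sqrt hθ.le).mpr hD1
      have ht : 0 < -θ + s := by linarith
      have hvt : (2 / (-θ + s)) * (-θ + s) = 2 := div_mul_cancel₀ 2 ht.ne'
      have hv : θ * (2 / (-θ + s)) ≤ x + θ := by nlinarith [hfx]
      have h2θ : 2 * θ ≤ (x + θ) * (-θ + s) := by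
        nlinarith [mul_le_mul_of_nonneg_right hv ht.le]
      have hsc : θ * (x + θ + 2) ≤ (x + θ) * s := by nlinarith
      have hsq : (θ * (x + θ + 2)) ^ 2 ≤ ((x + θ) * s) ^ 2 :=
        pow_le_pow_left₀ (by positivity) hsc 2
      have hs2' : (x + θ) ^ 2 * s ^ 2
          = (x + θ) ^ 2 * ((θ + 2) ^ 2 - 4 * u * (θ + 1)) := by rw [hs2, hDdef]
      rw [hG, le_div_iff₀ (by positivity)]
      nlinarith [hsq, hs2']
    · rintro ⟨hu0, huG⟩
      have hu1 : u < 1 := lt_of_le_of_lt huG hG1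
      refine ⟨?_, hu0, hu1⟩
      have hDnn : 0 ≤ D := by rw [hDdef]; nlinarith
      have hs2 : s ^ 2 = D := by rw [hsdef]; exact Real.sq_sqrt hDnn
      have h1 : u * ((θ + 1) * (x + θ) ^ 2) ≤ x * (x * (θ + 1) + θ * (θ + 2)) := by
        rw [hG, le_div_iff₀ (by positivity)] at huG
        linarith
      have hc : θ * (x + θ + 2) / (x + θ) ≤ s := by
        rw [hsdef, Real.le_sqrt (by positivity) hDnn, div_pow,
          div_le_iff₀ (by positivity), hDdef]
        nlinarith [h1]
      have htc : 2 * θ / (x + θ) ≤ -θ + s := by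
        have heq : θ * (x + θ + 2) / (x + θ) - θ = 2 * θ / (x + θ) := by
          field_simp
          ring
        linarith
      have ht : 0 < -θ + s := lt_of_lt_of_le (by positivity) htc
      have h2θ : 2 * θ ≤ (x + θ) * (-θ + s) := by
        rw [div_le_iff₀ hxθ] at htc
        linarith [htc]
      have h2 : 2 / (-θ + s) ≤ (x + θ) / θ := by
        rw [div_le_div_iff₀ ht hθ]
        linarith [h2θ]
      have h3 : θ * (2 / (-θ + s)) ≤ x + θ := by
        have h5 := mul_le_mul_of_nonneg_left h2 hθ.le
        have h4 : θ * ((x + θ) / θ) = x + θ := by field_simp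
        linarith
      rw [mul_sub]
      linarith
  rw [hset, Real.volume_Ioc]
  norm_num
end
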